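/- arXiv:1604.00076 — 8 statements merged into one kernel-verified Lean document; each statement's English description precedes it below -/
import Mathlib

section
/- Let I be a finite set, let C = (C_1, …, C_k) be a set composition of I, and let n ∈ ℕ. Then the number of functions f : I → Fin n whose level-set composition comp(f) equals C is the binomial coefficient choose(n, k). -/
/-!
A function `f` with `levelComp f = C` is constant on every block of `C` and takes strictly
increasing values on the successive blocks, so `f = e ∘ β` for the block-index map
`β : I → Fin k` and an order embedding `e : Fin k ↪o α`, unique because `β` is onto; conversely
every such composite has level-set composition `C`. Order embeddings `Fin k ↪o α` correspond to
their ranges, the `k`-subsets of `α`.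
-/

/-- A set composition of a finite set `I`: a finite sequence of nonempty pairwise
disjoint subsets of `I` whose union is `I`. -/
def IsSetComposition {I : Type*} [Fintype I] [DecidableEq I] (C : List (Finset I)) : Prop :=
  (∀ B ∈ C, B.Nonempty) ∧ C.Pairwise Disjoint ∧ C.foldr (· ∪ ·) ∅ = Finset.univ

/-- The level-set composition of `f : I → α`: the list of preimages of the distinct
values attained by `f`, listed in increasing order of the values. -/
def levelComp {I : Type*} [Fintype I] [DecidableEq I] {α : Type*} [LinearOrder α]
    (f : I → α) : List (Finset I) :=
  ((Finset.univ.image f).sort (· ≤ ·)).map fun v => Finset.univ.filter fun i => f i = v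

open Function

theorem List.mem_foldr_union {α : Type*} [DecidableEq α] (L : List (Finset α)) (a : α) :
    a ∈ L.foldr (· ∪ ·) ∅ ↔ ∃ B ∈ L, a ∈ B := by
  induction L with
  | nil => simp
  | cons B L ih => simp [ih]

namespace IsSetComposition

variable {I : Type*} [Fintype I] [DecidableEq I] {C : List (Finset I)}

theorem exists_mem_getElem (hC : IsSetComposition C) (i : I) :
    ∃ j : Fin C.length, i ∈ C[(j : ℕ)] := by
  obtain ⟨B, hB, hiB⟩ := (List.mem_foldr_union C i).mp (hC.2.2 ▸ Finset.mem_univ i)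
  obtain ⟨j, hj, rfl⟩ := List.getElem_of_mem hB
  exact ⟨⟨j, hj⟩, hiB⟩

theorem eq_of_mem_getElem (hC : IsSetComposition C) {i : I} {j j' : Fin C.length}
    (h : i ∈ C[(j : ℕ)]) (h' : i ∈ C[(j' : ℕ)]) : j = j' := by
  by_contra hne
  have hdisj : Disjoint C[j] C[j'] := by
    rcases Fin.lt_or_lt_of_ne hne with hlt | hlt
    · exact List.pairwise_iff_getElem.mp hC.2.1 _ _ _ _ hlt
    · exact (List.pairwise_iff_getElem.mp hC.2.1 _ _ _ _ hlt).symm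
  exact Finset.disjoint_left.mp hdisj h h'

noncomputable def blockIndex (hC : IsSetComposition C) (i : I) : Fin C.length :=
  (hC.exists_mem_getElem i).choose

theorem mem_getElem_iff (hC : IsSetComposition C) {i : I} {j : Fin C.length} :
    i ∈ C[(j : ℕ)] ↔ hC.blockIndex i = j :=
  ⟨fun h => hC.eq_of_mem_getElem (hC.exists_mem_getElem i).choose_spec h,
    fun h => h ▸ (hC.exists_mem_getElem i).choose_spec⟩

theorem blockIndex_surjective (hC : IsSetComposition C) : Surjective hC.blockIndex := fun j => by
  obtain ⟨i, hi⟩ := hC.1 _ (List.getElem_mem j.2)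
  exact ⟨i, hC.mem_getElem_iff.mp hi⟩

end IsSetComposition

section LinearOrder

variable {I : Type*} [Fintype I] [DecidableEq I] {C : List (Finset I)} {α : Type*} [LinearOrder α]

theorem levelComp_comp_blockIndex (hC : IsSetComposition C) (e : Fin C.length ↪o α) :
    levelComp (e ∘ hC.blockIndex) = C := by
  have himage : Finset.univ.image (e ∘ hC.blockIndex) = Finset.univ.map e.toEmbedding := by
    rw [← Finset.image_image, Finset.image_univ_of_surjective hC.blockIndex_surjective,
      Finset.map_eq_image]
    rfl
  have hsort : (Finset.univ.image (e ∘ hC.blockIndex)).sort (· ≤ ·)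
      = (List.finRange C.length).map e := by
    rw [himage, ← (e.strictMono.strictMonoOn _).map_finsetSort, Fin.sort_univ]
    rfl
  rw [levelComp, hsort, List.map_map]
  conv_rhs => rw [← List.map_getElem_finRange C]
  refine List.map_congr_left fun j _ => ?_
  ext i
  simp [hC.mem_getElem_iff, eq_comm]

theorem exists_eq_comp_blockIndex_of_levelComp_eq (hC : IsSetComposition C) {f : I → α}
    (hf : levelComp f = C) : ∃ e : Fin C.length ↪o α, e ∘ hC.blockIndex = f := by
  have hcard : (Finset.univ.image f).card = C.length := by
    rw [← Finset.length_sort (· ≤ ·), ← hf, levelComp, List.length_map]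
  refine ⟨(Finset.univ.image f).orderEmbOfFin hcard, funext fun i => ?_⟩
  have hi : i ∈ C[(hC.blockIndex i : ℕ)] := hC.mem_getElem_iff.mpr rfl
  simp only [← hf, levelComp, List.getElem_map, Finset.mem_filter] at hi
  rw [comp_apply, Finset.orderEmbOfFin_apply]
  exact hi.2.symm

theorem natCard_levelComp_eq (hC : IsSetComposition C) :
    Nat.card {f : I → α // levelComp f = C} = (Nat.card α).choose C.length := by
  let toFiber (e : Fin C.length ↪o α) : {f : I → α // levelComp f = C} :=
    ⟨e ∘ hC.blockIndex, levelComp_comp_blockIndex hC e⟩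
  have hbij : Bijective toFiber := by
    constructor
    · intro e e' h
      exact DFunLike.coe_injective
        (hC.blockIndex_surjective.injective_comp_right (congrArg Subtype.val h))
    · rintro ⟨f, hf⟩
      obtain ⟨e, rfl⟩ := exists_eq_comp_blockIndex_of_levelComp_eq hC hf
      exact ⟨e, rfl⟩
  rw [← Nat.card_congr (Equiv.ofBijective toFiber hbij),
    Nat.card_congr Set.powersetCard.ofFinEmbEquiv, Set.powersetCard.card]

end LinearOrder

/-- The number of functions `f : I → Fin n` whose level-set composition equals a given
set composition `C` of length `k` is `choose n k`. -/
theorem count_levelComp_eq {I : Type*} [Fintype I] [DecidableEq I]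
    (C : List (Finset I)) (hC : IsSetComposition C) (n : ℕ) :
    (Finset.univ.filter fun f : I → Fin n => levelComp f = C).card = n.choose C.length := by
  rw [← Fintype.card_subtype, ← Nat.card_eq_fintype_card, natCard_levelComp_eq hC, Nat.card_fin]
end

section
/- Let I be a finite set and C = (C_1, …, C_k) a set composition of I, and for 1 ≤ j ≤ k set s_j = |C_j| + |C_{j+1}| + ⋯ + |C_k|. Let F_C ∈ ℤ[[X]] be the formal power series whose m-th coefficient is the number of functions a : I → ℕ with a(i) ≥ 1 for all i, level-set composition comp(a) = C, and Σ_{i ∈ I} a(i) = m. Then F_C · ∏_{j=1}^{k} (1 − X^{s_j}) = X^{s_1 + s_2 + ⋯ + s_k}. -/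
/-- The suffix sums `s_j = |C_j| + ⋯ + |C_k|` (with `j` zero-indexed). -/
def suffixSize {I : Type*} (C : List (Finset I)) (j : ℕ) : ℕ :=
  ((C.drop j).map Finset.card).sum

/-! A function `a ≥ 1` with `levelComp a = C` is the same as a strictly increasing positive
sequence `v_1 < ⋯ < v_k` of block values, and `∑ a = ∑_j |C_j| v_j`. Passing to the successive
differences `b_j = v_j - v_{j-1} ≥ 1` turns this weight into `∑_j s_j b_j`, so
`F_C = ∏_j ∑_{b ≥ 1} X^{s_j b} = ∏_j X^{s_j} / (1 - X^{s_j})`. -/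

namespace PowerSeries

variable (R : Type*) [CommRing R]

noncomputable def posMultiples (s : ℕ) : R⟦X⟧ := mk fun m => if 0 < m ∧ s ∣ m then 1 else 0

variable {R}

theorem posMultiples_mul_one_sub_X_pow {s : ℕ} (hs : 0 < s) :
    posMultiples R s * (1 - X ^ s) = X ^ s := by
  ext n
  rw [mul_one_sub, map_sub, coeff_mul_X_pow', coeff_X_pow, posMultiples, coeff_mk]
  rcases lt_or_ge n s with hn | hn
  · have : ¬ (0 < n ∧ s ∣ n) := fun h => (Nat.le_of_dvd h.1 h.2).not_gt hn
    simp [hn.ne, hn.not_ge, this]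
  · obtain ⟨r, rfl⟩ := Nat.exists_eq_add_of_le hn
    simp only [Nat.add_sub_cancel_left, hn, Nat.dvd_add_right (dvd_refl s), if_true]
    rcases Nat.eq_zero_or_pos r with rfl | hr
    · simp [hs]
    · simp [hr, hr.ne', hs]

theorem coeff_prod_posMultiples {ι : Type*} [Fintype ι] [DecidableEq ι] (s : ι → ℕ)
    (hs : ∀ j, 0 < s j) (m : ℕ) :
    coeff m (∏ j, posMultiples R (s j)) =
      Nat.card {b : ι → ℕ // (∀ j, 0 < b j) ∧ ∑ j, s j * b j = m} := by
  simp only [coeff_prod, posMultiples, coeff_mk, Finset.prod_boole, Finset.mem_univ, true_imp_iff]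
  rw [Finset.sum_boole, ← Nat.card_eq_finsetCard]
  congr 1
  refine Nat.card_congr
    { toFun := fun l => ⟨fun j => l.1 j / s j, ?_⟩
      invFun := fun b => ⟨Finsupp.equivFunOnFinite.symm fun j => s j * b.1 j, ?_⟩
      left_inv := fun l => ?_
      right_inv := fun b => ?_ }
  · obtain ⟨l, hl⟩ := l
    simp only [Finset.mem_filter, Finset.mem_finsuppAntidiag] at hl
    refine ⟨fun j => Nat.div_pos ?_ (hs j), ?_⟩
    · exact Nat.le_of_dvd (hl.2 j).1 (hl.2 j).2
    · simp only [Nat.mul_div_cancel' (hl.2 _).2]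
      exact hl.1.1
  · obtain ⟨b, hb⟩ := b
    simp only [Finset.mem_filter, Finset.mem_finsuppAntidiag,
      Finsupp.equivFunOnFinite_symm_apply_apply]
    exact ⟨⟨hb.2, Finset.subset_univ _⟩, fun j => ⟨Nat.mul_pos (hs j) (hb.1 j), dvd_mul_right _ _⟩⟩
  · obtain ⟨l, hl⟩ := l
    simp only [Finset.mem_filter, Finset.mem_finsuppAntidiag] at hl
    ext j
    simp [Nat.mul_div_cancel' (hl.2 j).2]
  · ext j
    simp [Nat.mul_div_cancel_left _ (hs j)]

end PowerSeries

section successiveDiff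

variable {n : ℕ}

def successiveDiff (w : Fin (n + 1) → ℕ) (j : Fin n) : ℕ := w j.succ - w j.castSucc

theorem successiveDiff_partialSum (b : Fin n → ℕ) : successiveDiff (Fin.partialSum b) = b := by
  funext j
  simp [successiveDiff, Fin.partialSum_succ]

theorem partialSum_successiveDiff {w : Fin (n + 1) → ℕ} (hw : Monotone w) (h0 : w 0 = 0) :
    Fin.partialSum (successiveDiff w) = w := by
  funext i
  induction i using Fin.induction with
  | zero => simp [h0]
  | succ j ih =>
    rw [Fin.partialSum_succ, ih, successiveDiff,
      Nat.add_sub_cancel' (hw (Fin.castSucc_le_succ j))]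

theorem strictMono_partialSum_iff {b : Fin n → ℕ} :
    StrictMono (Fin.partialSum b) ↔ ∀ j, 0 < b j := by
  simp [Fin.strictMono_iff_lt_succ, Fin.partialSum_succ]

theorem sum_mul_partialSum_succ (c b : Fin n → ℕ) :
    ∑ j, c j * Fin.partialSum b j.succ = ∑ t, (∑ j with t ≤ j, c j) * b t := by
  simp only [Fin.partialSum, List.sum_take_ofFn, Fin.val_succ, Nat.lt_succ_iff, Fin.val_fin_le,
    Finset.mul_sum, Finset.sum_mul, Finset.sum_filter]
  rw [Finset.sum_comm]
  simp only [ite_mul, zero_mul, mul_ite, mul_zero]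

theorem card_strictMono_pos_eq (c : Fin n → ℕ) (m : ℕ) :
    Nat.card {v : Fin n → ℕ // StrictMono v ∧ (∀ j, 0 < v j) ∧ ∑ j, c j * v j = m} =
      Nat.card {b : Fin n → ℕ // (∀ j, 0 < b j) ∧ ∑ t, (∑ j with t ≤ j, c j) * b t = m} := by
  have hcons {v : Fin n → ℕ} (hv : StrictMono v) (hpos : ∀ j, 0 < v j) :
      StrictMono (Fin.cons 0 v : Fin (n + 1) → ℕ) :=
    Fin.strictMono_cons.mpr ⟨hpos, hv⟩
  have hdiff {v : Fin n → ℕ} (hv : StrictMono v) (hpos : ∀ j, 0 < v j) (j : Fin n) :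
      Fin.partialSum (successiveDiff (Fin.cons 0 v)) j.succ = v j := by
    rw [partialSum_successiveDiff (hcons hv hpos).monotone (Fin.cons_zero _ _), Fin.cons_succ]
  have hcons_partialSum (b : Fin n → ℕ) :
      (Fin.cons 0 fun j => Fin.partialSum b j.succ : Fin (n + 1) → ℕ) = Fin.partialSum b :=
    Fin.partialSum_zero b ▸ Fin.cons_self_tail _
  refine Nat.card_congr
    { toFun := fun v => ⟨successiveDiff (Fin.cons 0 v.1), fun j => ?_, ?_⟩
      invFun := fun b => ⟨fun j => Fin.partialSum b.1 j.succ, ?_, fun j => ?_, ?_⟩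
      left_inv := fun v => Subtype.ext (funext (hdiff v.2.1 v.2.2.1))
      right_inv := fun b => Subtype.ext ?_ }
  · exact Nat.sub_pos_of_lt (Fin.strictMono_iff_lt_succ.mp (hcons v.2.1 v.2.2.1) j)
  · rw [← sum_mul_partialSum_succ]
    simp only [hdiff v.2.1 v.2.2.1]
    exact v.2.2.2
  · exact (strictMono_partialSum_iff.mpr b.2.1).comp Fin.strictMono_succ
  · simpa using strictMono_partialSum_iff.mpr b.2.1 (Fin.succ_pos j)
  · rw [sum_mul_partialSum_succ]; exact b.2.2
  · simp only [hcons_partialSum, successiveDiff_partialSum]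

end successiveDiff

section levelComp

variable {I : Type*} [Fintype I] [DecidableEq I]

theorem levelComp_comp_strictMono {α β : Type*} [LinearOrder α] [LinearOrder β] (f : I → α)
    {g : α → β} (hg : StrictMono g) : levelComp (g ∘ f) = levelComp f := by
  have hsort : (Finset.univ.image (g ∘ f)).sort (· ≤ ·) =
      ((Finset.univ.image f).sort (· ≤ ·)).map g := by
    have h := (hg.strictMonoOn (Finset.univ.image f)).map_finsetSort (f := ⟨g, hg.injective⟩)
    rw [Finset.map_eq_image] at h
    rw [← Finset.image_image]
    exact h.symm
  simp only [levelComp, hsort, List.map_map]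
  congr 1
  funext v
  simp [hg.injective.eq_iff]

theorem levelComp_of_surjective {k : ℕ} {f : I → Fin k} (hf : Function.Surjective f) :
    levelComp f = List.ofFn fun j => Finset.univ.filter fun i => f i = j := by
  rw [levelComp, Finset.image_univ_of_surjective hf, Fin.sort_univ, List.ofFn_eq_map]

end levelComp

theorem suffixSize_eq_sum {I : Type*} (C : List (Finset I)) (j : Fin C.length) :
    suffixSize C j = ∑ t with j ≤ t, (C.get t).card := by
  have h := List.sum_take_add_sum_drop (List.ofFn fun t => (C.get t).card) j
  rw [List.sum_take_ofFn, List.sum_ofFn,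
    ← Finset.sum_filter_add_sum_filter_not Finset.univ (fun t : Fin C.length => t.val < j)] at h
  have hmap : C.map Finset.card = List.ofFn fun t => (C.get t).card := by
    conv_lhs => rw [← List.ofFn_get C]
    exact List.map_ofFn
  rw [suffixSize, List.map_drop, hmap]
  simp only [not_lt, Fin.le_def] at h ⊢
  omega

namespace IsSetComposition

variable {I : Type*} [Fintype I] [DecidableEq I] {C : List (Finset I)}

theorem exists_mem_get (hC : IsSetComposition C) (i : I) : ∃ j, i ∈ C.get j := by
  have hi : i ∈ C.foldr (· ∪ ·) ∅ := hC.2.2 ▸ Finset.mem_univ i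
  obtain ⟨B, hB, hiB⟩ : ∃ B ∈ C, i ∈ B := by
    clear hC; induction C <;> aesop
  obtain ⟨j, rfl⟩ := List.mem_iff_get.mp hB
  exact ⟨j, hiB⟩

theorem eq_of_mem_get (hC : IsSetComposition C) {i : I} {j j' : Fin C.length}
    (hj : i ∈ C.get j) (hj' : i ∈ C.get j') : j = j' := by
  by_contra hne
  rcases lt_or_gt_of_ne hne with h | h
  · exact Finset.disjoint_left.mp (List.pairwise_iff_get.mp hC.2.1 _ _ h) hj hj'
  · exact Finset.disjoint_left.mp (List.pairwise_iff_get.mp hC.2.1 _ _ h) hj' hj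

noncomputable def blockIdx (hC : IsSetComposition C) (i : I) : Fin C.length :=
  (hC.exists_mem_get i).choose

theorem mem_get_blockIdx (hC : IsSetComposition C) (i : I) : i ∈ C.get (hC.blockIdx i) :=
  (hC.exists_mem_get i).choose_spec

theorem blockIdx_eq_iff (hC : IsSetComposition C) {i : I} {j : Fin C.length} :
    hC.blockIdx i = j ↔ i ∈ C.get j :=
  ⟨fun h => h ▸ hC.mem_get_blockIdx i, hC.eq_of_mem_get (hC.mem_get_blockIdx i)⟩

theorem blockIdx_surjective (hC : IsSetComposition C) : Function.Surjective hC.blockIdx := by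
  intro j
  obtain ⟨i, hi⟩ := hC.1 _ (C.get_mem j)
  exact ⟨i, hC.blockIdx_eq_iff.mpr hi⟩

theorem levelComp_comp_blockIdx (hC : IsSetComposition C) {α : Type*} [LinearOrder α]
    {v : Fin C.length → α} (hv : StrictMono v) : levelComp (v ∘ hC.blockIdx) = C := by
  rw [levelComp_comp_strictMono _ hv, levelComp_of_surjective hC.blockIdx_surjective]
  conv_rhs => rw [← List.ofFn_get C]
  congr 1
  funext j
  ext i
  simp [hC.blockIdx_eq_iff]

theorem levelComp_eq_iff (hC : IsSetComposition C) {α : Type*} [LinearOrder α] {a : I → α} :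
    levelComp a = C ↔ ∃ v : Fin C.length → α, StrictMono v ∧ a = v ∘ hC.blockIdx := by
  refine ⟨fun h => ?_, fun ⟨v, hv, ha⟩ => ha ▸ hC.levelComp_comp_blockIdx hv⟩
  set L := (Finset.univ.image a).sort (· ≤ ·)
  have hlen : C.length = L.length := by rw [← h, levelComp, List.length_map]
  refine ⟨fun j => L.get (j.cast hlen), ?_, funext fun i => ?_⟩
  · exact (Finset.sortedLT_sort _).strictMono_get.comp (Fin.cast_strictMono hlen)
  · have hi := hC.mem_get_blockIdx i
    simp only [List.get_eq_getElem, List.getElem_of_eq h.symm, levelComp, List.getElem_map,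
      Finset.mem_filter] at hi
    simpa using hi.2

theorem sum_comp_blockIdx (hC : IsSetComposition C) {M : Type*} [AddCommMonoid M]
    (f : Fin C.length → M) : ∑ i, f (hC.blockIdx i) = ∑ j, (C.get j).card • f j := by
  rw [← Finset.sum_fiberwise Finset.univ hC.blockIdx]
  refine Finset.sum_congr rfl fun j _ => ?_
  rw [Finset.sum_congr rfl fun i hi => congrArg f (Finset.mem_filter.mp hi).2, Finset.sum_const]
  congr 2
  ext i
  simp [hC.blockIdx_eq_iff]

theorem card_levelComp_eq (hC : IsSetComposition C) (m : ℕ) :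
    Nat.card {a : I → ℕ // (∀ i, 1 ≤ a i) ∧ levelComp a = C ∧ ∑ i, a i = m} =
      Nat.card {v : Fin C.length → ℕ //
        StrictMono v ∧ (∀ j, 0 < v j) ∧ ∑ j, (C.get j).card * v j = m} := by
  have hsum (v : Fin C.length → ℕ) : ∑ i, v (hC.blockIdx i) = ∑ j, (C.get j).card * v j := by
    simp [hC.sum_comp_blockIdx]
  symm
  refine Nat.card_congr (Equiv.ofBijective
    (fun v => ⟨v.1 ∘ hC.blockIdx, hC.blockIdx_surjective.forall.mp v.2.2.1,
      hC.levelComp_comp_blockIdx v.2.1, (hsum v.1).trans v.2.2.2⟩) ⟨fun v w h => ?_, fun a => ?_⟩)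
  · exact Subtype.ext (hC.blockIdx_surjective.injective_comp_right (congrArg Subtype.val h))
  · obtain ⟨a, hpos, ha, hm⟩ := a
    obtain ⟨v, hv, rfl⟩ := hC.levelComp_eq_iff.mp ha
    exact ⟨⟨v, hv, hC.blockIdx_surjective.forall.mpr hpos, (hsum v).symm.trans hm⟩, rfl⟩

theorem suffixSize_pos (hC : IsSetComposition C) (j : Fin C.length) : 0 < suffixSize C j := by
  rw [suffixSize_eq_sum]
  exact (Finset.card_pos.mpr (hC.1 _ (C.get_mem j))).trans_le
    (Finset.single_le_sum (f := fun t => (C.get t).card) (fun _ _ => Nat.zero_le _)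
      (Finset.mem_filter.mpr ⟨Finset.mem_univ _, le_rfl⟩))

end IsSetComposition

/-- If `F_C ∈ ℤ[[X]]` has `m`-th coefficient the number of `a : I → ℕ` with all values at
least 1, level-set composition `C`, and total sum `m`, then
`F_C · ∏_j (1 − X^{s_j}) = X^{s_1 + ⋯ + s_k}`. -/
theorem genFun_levelComp {I : Type*} [Fintype I] [DecidableEq I]
    (C : List (Finset I)) (hC : IsSetComposition C) :
    (PowerSeries.mk fun m : ℕ =>
        (Nat.card {a : I → ℕ // (∀ i, 1 ≤ a i) ∧ levelComp a = C ∧ ∑ i, a i = m} : ℤ)) *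
      ∏ j ∈ Finset.range C.length, (1 - (PowerSeries.X : PowerSeries ℤ) ^ suffixSize C j) =
    (PowerSeries.X : PowerSeries ℤ) ^ ∑ j ∈ Finset.range C.length, suffixSize C j := by
  have hF : (PowerSeries.mk fun m : ℕ =>
        (Nat.card {a : I → ℕ // (∀ i, 1 ≤ a i) ∧ levelComp a = C ∧ ∑ i, a i = m} : ℤ)) =
      ∏ j : Fin C.length, PowerSeries.posMultiples ℤ (suffixSize C j) := by
    ext m
    rw [PowerSeries.coeff_mk, PowerSeries.coeff_prod_posMultiples _ hC.suffixSize_pos,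
      hC.card_levelComp_eq, card_strictMono_pos_eq]
    simp only [suffixSize_eq_sum]
  rw [hF, ← Fin.prod_univ_eq_prod_range, ← Finset.prod_mul_distrib, ← Fin.sum_univ_eq_sum_range,
    ← Finset.prod_pow_eq_pow_sum]
  exact Finset.prod_congr rfl fun j _ =>
    PowerSeries.posMultiples_mul_one_sub_X_pow (hC.suffixSize_pos j)
end

section
/- Let G and H be simple graphs on disjoint finite vertex sets V and W, and let G ⊕ H denote their disjoint union, the simple graph on V ⊕ W in which two vertices are adjacent iff they both lie in V and are adjacent in G, or both lie in W and are adjacent in H. Then for every commutative ring R, q ∈ R, and n ∈ ℕ, P_{G⊕H}(q, n) = P_G(q, n) · P_H(q, n). -/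
open scoped Classical in
/-- The `q`-chromatic polynomial `P_G(q, n) = Σ_{proper colorings f : V → Fin n} q^{w(f)}`,
where `w(f) = Σ_{v ∈ V} f(v)` (values in `Fin n` viewed as natural numbers). -/
noncomputable def qChromatic {V : Type*} [Fintype V] [DecidableEq V] (G : SimpleGraph V)
    {R : Type*} [CommRing R] (q : R) (n : ℕ) : R :=
  ∑ f ∈ Finset.univ.filter (fun f : V → Fin n => ∀ u v, G.Adj u v → f u ≠ f v),
    q ^ ∑ v, (f v : ℕ)

/-
Proper colorings of `G ⊕g H` are exactly pairs of proper colorings of `G` and `H`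
(`SimpleGraph.Coloring.sumEquiv`), and the weight of such a coloring is the sum of the weights
of its two halves, so `q ^ w` factors and the sum splits into a product.
-/

namespace SimpleGraph

theorem sum_coloring_eq_sum_filter {V α M : Type*} [Fintype V] [DecidableEq V] [Fintype α]
    [AddCommMonoid M] (G : SimpleGraph V) (F : (V → α) → M)
    [DecidablePred fun f : V → α => ∀ u v, G.Adj u v → f u ≠ f v] :
    ∑ c : G.Coloring α, F c =
      ∑ f ∈ Finset.univ.filter (fun f : V → α => ∀ u v, G.Adj u v → f u ≠ f v), F f := by
  refine Finset.sum_bij (fun c _ => ⇑c) (fun c _ => ?_)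
    (fun _ _ _ _ h => DFunLike.coe_injective h) (fun f hf => ?_) (fun _ _ => rfl)
  · simpa using fun u v => c.valid
  · exact ⟨Coloring.mk f (fun h => (Finset.mem_filter.1 hf).2 _ _ h), Finset.mem_univ _, rfl⟩

end SimpleGraph

open SimpleGraph

open scoped Classical in
theorem qChromatic_eq_sum_coloring {V : Type*} [Fintype V] [DecidableEq V] (G : SimpleGraph V)
    {R : Type*} [CommRing R] (q : R) (n : ℕ) :
    qChromatic G q n = ∑ c : G.Coloring (Fin n), q ^ ∑ v, (c v : ℕ) :=
  (G.sum_coloring_eq_sum_filter _).symm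

/-- `P_{G ⊕ H}(q, n) = P_G(q, n) · P_H(q, n)` for the disjoint union of simple graphs. -/
theorem qChromatic_sum_graph {V W : Type*} [Fintype V] [DecidableEq V] [Fintype W]
    [DecidableEq W] (G : SimpleGraph V) (H : SimpleGraph W)
    {R : Type*} [CommRing R] (q : R) (n : ℕ) :
    qChromatic (G ⊕g H) q n = qChromatic G q n * qChromatic H q n := by
  calc qChromatic (G ⊕g H) q n
      = ∑ c : (G ⊕g H).Coloring (Fin n), q ^ ∑ x, (c x : ℕ) := qChromatic_eq_sum_coloring _ q n
    _ = ∑ p : G.Coloring (Fin n) × H.Coloring (Fin n),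
          q ^ (∑ v, (p.1 v : ℕ)) * q ^ ∑ w, (p.2 w : ℕ) :=
        Fintype.sum_equiv Coloring.sumEquiv _ _ fun c => by
          rw [Fintype.sum_sum_type, pow_add]; rfl
    _ = qChromatic G q n * qChromatic H q n := by
        rw [qChromatic_eq_sum_coloring, qChromatic_eq_sum_coloring, Fintype.sum_mul_sum,
          Fintype.sum_prod_type]
end

section
/- Let G be a simple graph on a finite vertex set V, let R be a commutative ring, q ∈ R, and m, n ∈ ℕ. Then P_G(q, m+n) = Σ_{S ⊆ V} q^{m·|V∖S|} · P_{G[S]}(q, m) · P_{G[V∖S]}(q, n), where G[S] denotes the induced subgraph of G on S. -/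
open Finset

section JoinColorings

variable {V : Type*} [Fintype V] [DecidableEq V] {m n : ℕ}

def lowerColored (m : ℕ) {k : ℕ} (f : V → Fin k) : Finset V := univ.filter fun v => (f v : ℕ) < m

def joinColorings (S : Finset V) (g : ↥(S : Set V) → Fin m)
    (h : ↥((Sᶜ : Finset V) : Set V) → Fin n) : V → Fin (m + n) :=
  fun v => if hv : v ∈ S then Fin.castAdd n (g ⟨v, hv⟩) else Fin.natAdd m (h ⟨v, by simpa using hv⟩)

variable {S : Finset V} {g : ↥(S : Set V) → Fin m} {h : ↥((Sᶜ : Finset V) : Set V) → Fin n}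

theorem joinColorings_of_mem {v : V} (hv : v ∈ S) :
    joinColorings S g h v = Fin.castAdd n (g ⟨v, hv⟩) :=
  dif_pos hv

theorem joinColorings_of_notMem {v : V} (hv : v ∉ S) :
    joinColorings S g h v = Fin.natAdd m (h ⟨v, by simpa using hv⟩) :=
  dif_neg hv

theorem lowerColored_joinColorings : lowerColored m (joinColorings S g h) = S := by
  ext v
  by_cases hv : v ∈ S
  · simp [lowerColored, joinColorings_of_mem hv, hv]
  · simp [lowerColored, joinColorings_of_notMem hv, hv]

theorem joinColorings_injective (S : Finset V) :
    Function.Injective fun p : (↥(S : Set V) → Fin m) × (↥((Sᶜ : Finset V) : Set V) → Fin n) =>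
      joinColorings S p.1 p.2 := by
  rintro ⟨g, h⟩ ⟨g', h'⟩ hgh
  dsimp only at hgh
  refine Prod.ext (funext fun v => ?_) (funext fun v => ?_)
  · have hv := congrFun hgh v
    rwa [joinColorings_of_mem v.2, joinColorings_of_mem v.2,
      (Fin.castAdd_injective m n).eq_iff] at hv
  · have hv := congrFun hgh v
    have hvS : (v : V) ∉ S := by simpa using v.2
    rwa [joinColorings_of_notMem hvS, joinColorings_of_notMem hvS,
      (Fin.natAdd_injective n m).eq_iff] at hv

theorem exists_joinColorings_eq {f : V → Fin (m + n)} (hf : lowerColored m f = S) :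
    ∃ g h, joinColorings S g h = f := by
  have hlt : ∀ v ∈ S, (f v : ℕ) < m := fun v hv => by simpa [← hf, lowerColored] using hv
  have hge : ∀ v ∉ S, m ≤ (f v : ℕ) := fun v hv => by simpa [← hf, lowerColored] using hv
  have hsub : ∀ v ∉ S, (f v : ℕ) - m < n := fun v hv => by
    have := (f v).isLt
    have := hge v hv
    omega
  refine ⟨fun v => ⟨f v, hlt v v.2⟩, fun v => ⟨f v - m, hsub v (by simpa using v.2)⟩,
    funext fun v => ?_⟩
  by_cases hv : v ∈ S
  · simp [joinColorings_of_mem hv]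
  · have := hge v hv
    ext
    simp [joinColorings_of_notMem hv]
    omega

theorem sum_val_joinColorings :
    ∑ v, (joinColorings S g h v : ℕ) = m * #Sᶜ + ∑ v, (g v : ℕ) + ∑ v, (h v : ℕ) := by
  have hS : ∑ v ∈ S, (joinColorings S g h v : ℕ) = ∑ v, (g v : ℕ) := by
    rw [← sum_coe_sort S]
    exact sum_congr rfl fun v _ => by rw [joinColorings_of_mem v.2, Fin.val_castAdd]; rfl
  have hSc : ∑ v ∈ Sᶜ, (joinColorings S g h v : ℕ) = ∑ v, (m + (h v : ℕ)) := by
    rw [← sum_coe_sort Sᶜ]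
    exact sum_congr rfl fun v _ => by
      rw [joinColorings_of_notMem (mem_compl.mp v.2), Fin.val_natAdd]; rfl
  have hcard : Fintype.card ↥((Sᶜ : Finset V) : Set V) = #Sᶜ := by
    simp only [coe_sort_coe, Fintype.card_coe]
  rw [← sum_add_sum_compl S, hS, hSc, sum_add_distrib, sum_const, card_univ, hcard, smul_eq_mul]
  ring

end JoinColorings

namespace SimpleGraph

variable {V : Type*} [Fintype V] [DecidableEq V] {m n : ℕ}

open scoped Classical in
noncomputable def properColorings (G : SimpleGraph V) (n : ℕ) : Finset (V → Fin n) :=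
  univ.filter fun f => ∀ u v, G.Adj u v → f u ≠ f v

theorem mem_properColorings {G : SimpleGraph V} {f : V → Fin n} :
    f ∈ G.properColorings n ↔ ∀ u v, G.Adj u v → f u ≠ f v := by
  simp [properColorings]

theorem qChromatic_eq_sum_properColorings (G : SimpleGraph V) {R : Type*} [CommRing R] (q : R)
    (n : ℕ) : qChromatic G q n = ∑ f ∈ G.properColorings n, q ^ ∑ v, (f v : ℕ) :=
  rfl

variable {S : Finset V} {g : ↥(S : Set V) → Fin m} {h : ↥((Sᶜ : Finset V) : Set V) → Fin n}

theorem joinColorings_mem_properColorings_iff {G : SimpleGraph V} :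
    joinColorings S g h ∈ G.properColorings (m + n) ↔
      g ∈ (G.induce (S : Set V)).properColorings m ∧
        h ∈ (G.induce ((Sᶜ : Finset V) : Set V)).properColorings n := by
  simp only [mem_properColorings]
  constructor
  · intro hf
    refine ⟨fun u v huv hgv => hf u v huv ?_, fun u v huv hhv => hf u v huv ?_⟩
    · rw [joinColorings_of_mem u.2, joinColorings_of_mem v.2]
      exact congrArg _ hgv
    · rw [joinColorings_of_notMem (by simpa using u.2),
        joinColorings_of_notMem (by simpa using v.2)]
      exact congrArg _ hhv
  · rintro ⟨hg, hh⟩ u v huv hf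
    have hS : u ∈ S ↔ v ∈ S := by
      simp only [← lowerColored_joinColorings (g := g) (h := h), lowerColored, mem_filter,
        mem_univ, true_and, hf]
    by_cases hu : u ∈ S
    · have hv := hS.mp hu
      rw [joinColorings_of_mem hu, joinColorings_of_mem hv] at hf
      exact hg ⟨u, hu⟩ ⟨v, hv⟩ huv (Fin.castAdd_injective m n hf)
    · have hv := mt hS.mpr hu
      rw [joinColorings_of_notMem hu, joinColorings_of_notMem hv] at hf
      exact hh ⟨u, by simpa using hu⟩ ⟨v, by simpa using hv⟩ huv (Fin.natAdd_injective n m hf)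

theorem sum_properColorings_add {M : Type*} [AddCommMonoid M] (G : SimpleGraph V)
    (F : (V → Fin (m + n)) → M) :
    ∑ f ∈ G.properColorings (m + n), F f =
      ∑ S : Finset V, ∑ g ∈ (G.induce (S : Set V)).properColorings m,
        ∑ h ∈ (G.induce ((Sᶜ : Finset V) : Set V)).properColorings n, F (joinColorings S g h) := by
  rw [← sum_fiberwise _ (lowerColored m)]
  refine sum_congr rfl fun S _ => ?_
  have hfiber : {f ∈ G.properColorings (m + n) | lowerColored m f = S} =
      ((G.induce (S : Set V)).properColorings m ×ˢ
        (G.induce ((Sᶜ : Finset V) : Set V)).properColorings n).image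
          fun p => joinColorings S p.1 p.2 := by
    ext f
    simp only [mem_filter, mem_image, mem_product, Prod.exists]
    constructor
    · rintro ⟨hf, hS⟩
      obtain ⟨g, h, rfl⟩ := exists_joinColorings_eq hS
      exact ⟨g, h, joinColorings_mem_properColorings_iff.mp hf, rfl⟩
    · rintro ⟨g, h, hgh, rfl⟩
      exact ⟨joinColorings_mem_properColorings_iff.mpr hgh, lowerColored_joinColorings⟩
  rw [hfiber, sum_image (joinColorings_injective S).injOn, sum_product]

end SimpleGraph

open SimpleGraph

/-- `P_G(q, m+n) = Σ_{S ⊆ V} q^{m·|V∖S|} · P_{G[S]}(q, m) · P_{G[V∖S]}(q, n)`. -/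
theorem qChromatic_add {V : Type*} [Fintype V] [DecidableEq V] (G : SimpleGraph V)
    {R : Type*} [CommRing R] (q : R) (m n : ℕ) :
    qChromatic G q (m + n) =
      ∑ S : Finset V, q ^ (m * Sᶜ.card) *
        qChromatic (G.induce (S : Set V)) q m *
        qChromatic (G.induce ((Sᶜ : Finset V) : Set V)) q n := by
  rw [qChromatic_eq_sum_properColorings, sum_properColorings_add]
  refine sum_congr rfl fun S _ => ?_
  rw [qChromatic_eq_sum_properColorings, qChromatic_eq_sum_properColorings, mul_assoc, sum_mul_sum,
    mul_sum]
  refine sum_congr rfl fun g _ => ?_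
  rw [mul_sum]
  refine sum_congr rfl fun h _ => ?_
  rw [sum_val_joinColorings, pow_add, pow_add, mul_assoc]
end

section
/- Let P be a partial order on a finite set I, let R be a commutative ring, q ∈ R, and m, n ∈ ℕ. Then Ω_P(q, m+n) = Σ_S q^{m·|I∖S|} · Ω_{P[S]}(q, m) · Ω_{P[I∖S]}(q, n), where the sum is over all lower sets S of P (subsets S ⊆ I such that i ≤ j and j ∈ S imply i ∈ S), and P[S], P[I∖S] denote the induced partial orders. -/
/-!
Split a strictly order-preserving `f : I → Fin (m + n)` along the threshold `m`: the set
`S = {i | f i < m}` is a lower set, `f` restricted to `S` is a strictly order-preserving map to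
`Fin m`, and `f - m` restricted to `Sᶜ` is one to `Fin n`. Conversely, for a lower set `S`, any
two such maps glue back, because no element of `Sᶜ` lies below an element of `S`. The shift by
`m` on `Sᶜ` contributes the factor `q ^ (m * |Sᶜ|)` to the weight.
-/

open scoped Classical in
/-- The `q`-analogue of the strict order polynomial:
`Ω_P(q, n) = Σ_{strictly order-preserving f : I → Fin n} q^{w(f)}`, where
`w(f) = Σ_{i ∈ I} f(i)` (values in `Fin n` viewed as natural numbers). -/
noncomputable def qOrderPoly (I : Type*) [Fintype I] [DecidableEq I] [PartialOrder I]
    {R : Type*} [CommRing R] (q : R) (n : ℕ) : R :=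
  ∑ f ∈ Finset.univ.filter (fun f : I → Fin n => ∀ i j : I, i < j → f i < f j),
    q ^ ∑ i, (f i : ℕ)

open Finset

namespace FinAddSplit

variable {I : Type*} {m n : ℕ} {S : Finset I}

def low (f : I → Fin (m + n)) (hf : ∀ i, (f i : ℕ) < m ↔ i ∈ S) (i : S) : Fin m :=
  ⟨f i, (hf i).2 i.2⟩

lemma strictMono_low [Preorder I] {f : I → Fin (m + n)} (hf : ∀ i, (f i : ℕ) < m ↔ i ∈ S)
    (hmono : StrictMono f) : StrictMono (low f hf) :=
  fun _ _ hab => hmono hab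

variable [Fintype I] [DecidableEq I]

def high (f : I → Fin (m + n)) (hf : ∀ i, (f i : ℕ) < m ↔ i ∈ S) (i : (Sᶜ : Finset I)) :
    Fin n :=
  ⟨f i - m, by
    have := (f i).isLt
    have := mt (hf i).1 (mem_compl.1 i.2)
    omega⟩

def glue (S : Finset I) (g : S → Fin m) (h : (Sᶜ : Finset I) → Fin n) (i : I) : Fin (m + n) :=
  if hi : i ∈ S then Fin.castAdd n (g ⟨i, hi⟩) else Fin.natAdd m (h ⟨i, mem_compl.2 hi⟩)

section Glue

variable {g : S → Fin m} {h : (Sᶜ : Finset I) → Fin n}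

lemma glue_val_of_mem {i : I} (hi : i ∈ S) : (glue S g h i : ℕ) = g ⟨i, hi⟩ := by
  simp [glue, hi]

lemma glue_val_of_notMem {i : I} (hi : i ∉ S) :
    (glue S g h i : ℕ) = m + h ⟨i, mem_compl.2 hi⟩ := by
  simp [glue, hi]

lemma glue_lt_iff (i : I) : (glue S g h i : ℕ) < m ↔ i ∈ S := by
  by_cases hi : i ∈ S
  · simp [glue_val_of_mem hi, hi]
  · simp [glue_val_of_notMem hi, hi]

lemma low_glue : low (glue S g h) glue_lt_iff = g := by
  funext i
  exact Fin.ext (glue_val_of_mem i.2)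

lemma high_glue : high (glue S g h) glue_lt_iff = h := by
  funext i
  apply Fin.ext
  simp [high, glue_val_of_notMem (mem_compl.1 i.2)]

lemma sum_glue :
    ∑ i, (glue S g h i : ℕ) = m * #Sᶜ + ∑ i, (g i : ℕ) + ∑ i, (h i : ℕ) := by
  rw [← sum_add_sum_compl S, ← sum_coe_sort S, ← sum_coe_sort Sᶜ]
  simp only [glue_val_of_mem (coe_mem _), glue_val_of_notMem (mem_compl.1 (coe_mem _)),
    sum_add_distrib, sum_const, card_univ, Fintype.card_coe, smul_eq_mul]
  ring

lemma strictMono_glue [Preorder I] (hS : IsLowerSet (S : Set I)) (hg : StrictMono g)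
    (hh : StrictMono h) : StrictMono (glue S g h) := by
  intro a b hab
  rw [Fin.lt_def]
  by_cases hb : b ∈ S
  · have ha : a ∈ S := hS hab.le hb
    rw [glue_val_of_mem ha, glue_val_of_mem hb]
    exact hg (show (⟨a, ha⟩ : S) < ⟨b, hb⟩ from hab)
  · rw [glue_val_of_notMem hb]
    by_cases ha : a ∈ S
    · rw [glue_val_of_mem ha]
      omega
    · rw [glue_val_of_notMem ha]
      have := hh (show (⟨a, mem_compl.2 ha⟩ : (Sᶜ : Finset I)) < ⟨b, mem_compl.2 hb⟩ from hab)
      rw [Fin.lt_def] at this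
      omega

end Glue

section Split

variable {f : I → Fin (m + n)} (hf : ∀ i, (f i : ℕ) < m ↔ i ∈ S)

lemma strictMono_high [Preorder I] (hmono : StrictMono f) : StrictMono (high f hf) := by
  intro a b hab
  have hlt : (f a : ℕ) < f b := hmono hab
  have : ¬ (f a : ℕ) < m := mt (hf a).1 (mem_compl.1 a.2)
  rw [Fin.lt_def]
  simp only [high]
  omega

lemma glue_low_high : glue S (low f hf) (high f hf) = f := by
  funext i
  apply Fin.ext
  by_cases hi : i ∈ S
  · exact glue_val_of_mem hi
  · rw [glue_val_of_notMem hi]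
    have := mt (hf i).1 hi
    simp only [high]
    omega

end Split

end FinAddSplit

lemma isLowerSet_filter_lt {I : Type*} [Fintype I] [Preorder I] {β : Type*} [Preorder β]
    [DecidableLT β] {f : I → β} (hf : Monotone f) (c : β) :
    IsLowerSet ((univ.filter fun i => f i < c : Finset I) : Set I) := by
  convert (isLowerSet_Iio c).preimage hf using 1
  ext
  simp

section

open scoped Classical

variable {I : Type*} [Fintype I] [DecidableEq I] [PartialOrder I] {R : Type*} [CommRing R]

lemma qOrderPoly_eq_sum_strictMono (q : R) (n : ℕ) :
    qOrderPoly I q n = ∑ f ∈ univ.filter (StrictMono : (I → Fin n) → Prop), q ^ ∑ i, (f i : ℕ) :=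
  rfl

lemma sum_strictMono_filter_lt_eq_mul {S : Finset I} (hS : IsLowerSet (S : Set I)) (q : R)
    (m n : ℕ) :
    ∑ f ∈ (univ.filter (StrictMono : (I → Fin (m + n)) → Prop)).filter
        (fun f => univ.filter (fun i => (f i : ℕ) < m) = S), q ^ ∑ i, (f i : ℕ) =
      q ^ (m * #Sᶜ) * qOrderPoly S q m * qOrderPoly (Sᶜ : Finset I) q n := by
  have fiber {f : I → Fin (m + n)} (hf : univ.filter (fun i => (f i : ℕ) < m) = S) :
      ∀ i, (f i : ℕ) < m ↔ i ∈ S := by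
    simpa using Finset.ext_iff.1 hf
  rw [qOrderPoly_eq_sum_strictMono, qOrderPoly_eq_sum_strictMono, mul_assoc, sum_mul_sum,
    ← sum_product', mul_sum]
  symm
  refine sum_bij' (fun p _ => FinAddSplit.glue S p.1 p.2)
    (fun f hf => (FinAddSplit.low f (fiber (mem_filter.1 hf).2),
      FinAddSplit.high f (fiber (mem_filter.1 hf).2))) ?_ ?_ ?_ ?_ ?_
  · rintro ⟨g, h⟩ hgh
    simp only [mem_product, mem_filter, mem_univ, true_and] at hgh ⊢
    refine ⟨FinAddSplit.strictMono_glue hS hgh.1 hgh.2, ?_⟩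
    ext i
    simp [FinAddSplit.glue_lt_iff]
  · intro f hf
    simp only [mem_product, mem_filter, mem_univ, true_and] at hf ⊢
    exact ⟨FinAddSplit.strictMono_low _ hf.1, FinAddSplit.strictMono_high _ hf.1⟩
  · intro p _
    exact Prod.ext FinAddSplit.low_glue FinAddSplit.high_glue
  · intro f hf
    exact FinAddSplit.glue_low_high (fiber (mem_filter.1 hf).2)
  · intro p _
    rw [FinAddSplit.sum_glue, pow_add, pow_add]
    ring

end

open scoped Classical in
/-- `Ω_P(q, m+n) = Σ_{S a lower set of P} q^{m·|I∖S|} · Ω_{P[S]}(q, m) · Ω_{P[I∖S]}(q, n)`,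
where the sum is over all lower sets `S` of `P` and `P[S]`, `P[I∖S]` are the induced
partial orders. -/
theorem qOrderPoly_add {I : Type*} [Fintype I] [DecidableEq I] [PartialOrder I]
    {R : Type*} [CommRing R] (q : R) (m n : ℕ) :
    qOrderPoly I q (m + n) =
      ∑ S ∈ Finset.univ.filter (fun S : Finset I => IsLowerSet (S : Set I)),
        q ^ (m * Sᶜ.card) *
          qOrderPoly {i : I // i ∈ S} q m *
          qOrderPoly {i : I // i ∈ Sᶜ} q n := by
  rw [qOrderPoly_eq_sum_strictMono, ← sum_fiberwise_of_maps_to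
    (t := univ.filter fun S : Finset I => IsLowerSet (S : Set I))
    (g := fun f : I → Fin (m + n) => univ.filter fun i => (f i : ℕ) < m)
    fun f hf => mem_filter.2 ⟨mem_univ _,
      isLowerSet_filter_lt (Fin.val_strictMono.comp (mem_filter.1 hf).2).monotone m⟩]
  exact sum_congr rfl fun S hS => sum_strictMono_filter_lt_eq_mul (mem_filter.1 hS).2 q m n
end

section
/- Let F be a field, q ∈ F, and k, m ∈ ℕ. If f, g : ℕ → F satisfy 𝔇_k f = 0 and 𝔇_m g = 0, then their pointwise product satisfies 𝔇_{k+m}(f·g) = 0. That is, the product of a Gaussian polynomial function of degree at most k and one of degree at most m is a Gaussian polynomial function of degree at most k+m. -/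
/-- The operator `(D_j f)(n) = f(n+1) − q^j·f(n)`. -/
def Dop {R : Type*} [CommRing R] (q : R) (j : ℕ) (f : ℕ → R) : ℕ → R :=
  fun n => f (n + 1) - q ^ j * f n

/-- The operator `𝔇_d = D_0 ∘ D_1 ∘ ⋯ ∘ D_d`; a function `f : ℕ → R` is a Gaussian
polynomial function of degree at most `d` if `𝔇_d f = 0`. -/
def Dfull {R : Type*} [CommRing R] (q : R) : ℕ → (ℕ → R) → (ℕ → R)
  | 0 => Dop q 0
  | d + 1 => Dfull q d ∘ Dop q (d + 1)

/-! The `q`-Leibniz rule `D_{k+m}(f g) = D_k f · g(· + 1) + q^k · f · D_m g` reduces the claim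
to smaller degrees: since `𝔇_{d+1} = 𝔇_d ∘ D_{d+1}`, the function `D_k f` has degree at most
`k - 1` when `f` has degree at most `k ≥ 1`, and shifting the argument preserves the degree.
In degree `0` a function is constant, and `𝔇_d` commutes with multiplication by constants. -/

section

variable {R : Type*} [CommRing R] (q : R)

theorem Dfull_succ (d : ℕ) (f : ℕ → R) : Dfull q (d + 1) f = Dfull q d (Dop q (d + 1) f) :=
  rfl

theorem Dop_add (j : ℕ) (f g : ℕ → R) : Dop q j (f + g) = Dop q j f + Dop q j g := by
  funext n
  simp only [Dop, Pi.add_apply]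
  ring

theorem Dop_smul (j : ℕ) (c : R) (f : ℕ → R) : Dop q j (c • f) = c • Dop q j f := by
  funext n
  simp only [Dop, Pi.smul_apply, smul_eq_mul]
  ring

theorem Dfull_add (d : ℕ) (f g : ℕ → R) : Dfull q d (f + g) = Dfull q d f + Dfull q d g := by
  induction d generalizing f g with
  | zero => exact Dop_add q 0 f g
  | succ d ih => simp only [Dfull_succ, Dop_add, ih]

theorem Dfull_smul (d : ℕ) (c : R) (f : ℕ → R) : Dfull q d (c • f) = c • Dfull q d f := by
  induction d generalizing f with
  | zero => exact Dop_smul q 0 c f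
  | succ d ih => simp only [Dfull_succ, Dop_smul, ih]

theorem Dfull_shift (d : ℕ) (f : ℕ → R) :
    Dfull q d (fun n => f (n + 1)) = fun n => Dfull q d f (n + 1) := by
  induction d generalizing f with
  | zero => rfl
  | succ d ih => exact ih (Dop q (d + 1) f)

theorem Dop_mul (k m : ℕ) (f g : ℕ → R) :
    Dop q (k + m) (f * g) = Dop q k f * (fun n => g (n + 1)) + q ^ k • (f * Dop q m g) := by
  funext n
  simp only [Dop, Pi.mul_apply, Pi.add_apply, Pi.smul_apply, smul_eq_mul, pow_add]
  ring

theorem eq_const_of_Dfull_zero_eq_zero {f : ℕ → R} (hf : Dfull q 0 f = 0) :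
    f = fun _ => f 0 := by
  funext n
  induction n with
  | zero => rfl
  | succ n ih =>
    have hstep : f (n + 1) - q ^ 0 * f n = 0 := congrFun hf n
    rw [pow_zero, one_mul, sub_eq_zero] at hstep
    rw [hstep, ih]

theorem Dfull_mul_eq_zero_of_Dfull_zero_left (d : ℕ) {f g : ℕ → R} (hf : Dfull q 0 f = 0)
    (hg : Dfull q d g = 0) : Dfull q d (f * g) = 0 := by
  have hfg : f * g = f 0 • g := by
    rw [eq_const_of_Dfull_zero_eq_zero q hf]
    rfl
  rw [hfg, Dfull_smul, hg, smul_zero]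

theorem Dfull_mul_eq_zero {k m : ℕ} {f g : ℕ → R} (hf : Dfull q k f = 0)
    (hg : Dfull q m g = 0) : Dfull q (k + m) (f * g) = 0 := by
  induction k generalizing m f g with
  | zero => simpa using Dfull_mul_eq_zero_of_Dfull_zero_left q m hf hg
  | succ k ihk =>
    induction m generalizing g with
    | zero => simpa [mul_comm f] using Dfull_mul_eq_zero_of_Dfull_zero_left q (k + 1) hg hf
    | succ m ihm =>
      have hshift : Dfull q (m + 1) (fun n => g (n + 1)) = 0 := by
        rw [Dfull_shift, hg]
        rfl
      have hleft : Dfull q (k + 1 + m) (Dop q (k + 1) f * fun n => g (n + 1)) = 0 := by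
        rw [Nat.add_right_comm]
        exact ihk (hf : Dfull q k (Dop q (k + 1) f) = 0) hshift
      have hright : Dfull q (k + 1 + m) (f * Dop q (m + 1) g) = 0 := ihm hg
      calc Dfull q (k + 1 + (m + 1)) (f * g)
          = Dfull q (k + 1 + m) (Dop q (k + 1 + (m + 1)) (f * g)) := rfl
        _ = 0 := by
          rw [Dop_mul q (k + 1) (m + 1), Dfull_add, Dfull_smul, hleft, hright, smul_zero,
            add_zero]

end

/-- The pointwise product of a Gaussian polynomial function of degree at most `k` and one
of degree at most `m` is a Gaussian polynomial function of degree at most `k + m`. -/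
theorem Dfull_mul {F : Type*} [Field F] (q : F) (k m : ℕ) (f g : ℕ → F)
    (hf : Dfull q k f = 0) (hg : Dfull q m g = 0) : Dfull q (k + m) (f * g) = 0 :=
  Dfull_mul_eq_zero q hf hg
end

section
/- Let F be a field, q ∈ F, and d ∈ ℕ. Then the set {f : ℕ → F | 𝔇_d f = 0} of Gaussian polynomial functions of degree at most d is an F-linear subspace of the space of all functions ℕ → F, and its dimension over F is exactly d + 1. -/
/-! `D_j` is the polynomial `X - q ^ j` evaluated at the shift operator `S f = f ∘ (· + 1)`, so
`𝔇_d = P(S)` for the monic polynomial `P = ∏_{j ≤ d} (X - q ^ j)` of degree `d + 1`. Hence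
`𝔇_d f = 0` says that `f` solves a linear recurrence of order `d + 1`, and such solutions are
determined freely by their first `d + 1` values. -/

open Polynomial Finset

section Shift
variable {R : Type*} [CommRing R]

variable (R) in
abbrev seqShift : Module.End R (ℕ → R) := LinearMap.funLeft R R (· + 1)

theorem seqShift_pow_apply (i : ℕ) (f : ℕ → R) (n : ℕ) : (seqShift R ^ i) f n = f (n + i) := by
  induction i generalizing f n with
  | zero => rfl
  | succ i ih => rw [pow_succ, Module.End.mul_apply, ih]; rfl

theorem aeval_seqShift_apply (p : R[X]) (f : ℕ → R) (n : ℕ) :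
    aeval (seqShift R) p f n = ∑ i ∈ range (p.natDegree + 1), p.coeff i * f (n + i) := by
  simp [aeval_eq_sum_range, seqShift_pow_apply]

end Shift

namespace LinearRecurrence
variable {R : Type*} [CommRing R]

/-- For monic `p`, the recurrence with characteristic polynomial `p`. -/
def ofMonic (p : R[X]) : LinearRecurrence R := ⟨p.natDegree, fun i => -p.coeff i⟩

theorem isSolution_ofMonic_iff {p : R[X]} (hp : p.Monic) (f : ℕ → R) :
    (ofMonic p).IsSolution f ↔ aeval (seqShift R) p f = 0 := by
  rw [funext_iff]
  refine forall_congr' fun n => ?_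
  change f (n + p.natDegree) = ∑ i : Fin p.natDegree, -p.coeff i * f (n + i) ↔ _
  rw [Fin.sum_univ_eq_sum_range (fun i => -p.coeff i * f (n + i)), aeval_seqShift_apply,
    sum_range_succ, hp.coeff_natDegree, one_mul, Pi.zero_apply]
  simp only [neg_mul, sum_neg_distrib, eq_neg_iff_add_eq_zero]
  rw [add_comm]

theorem finrank_solSpace [StrongRankCondition R] (E : LinearRecurrence R) :
    Module.finrank R E.solSpace = E.order := by
  rw [Module.finrank_eq_card_basis E.basis, Fintype.card_fin]

end LinearRecurrence

section Gaussian
variable {R : Type*} [CommRing R]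

noncomputable def gaussPoly (q : R) (d : ℕ) : R[X] := ∏ j ∈ range (d + 1), (X - C (q ^ j))

theorem gaussPoly_monic (q : R) (d : ℕ) : (gaussPoly q d).Monic :=
  monic_prod_of_monic _ _ fun j _ => monic_X_sub_C (q ^ j)

theorem natDegree_gaussPoly [Nontrivial R] (q : R) (d : ℕ) :
    (gaussPoly q d).natDegree = d + 1 := by
  rw [gaussPoly, natDegree_finsetProd_X_sub_C_eq_card, card_range]

theorem Dop_eq_aeval (q : R) (j : ℕ) (f : ℕ → R) :
    Dop q j f = aeval (seqShift R) (X - C (q ^ j)) f := by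
  ext n
  simp only [Dop, map_sub, aeval_X, aeval_C, LinearMap.sub_apply, Module.algebraMap_end_apply,
    Pi.sub_apply, Pi.smul_apply, smul_eq_mul]
  rfl

theorem Dfull_eq_aeval_gaussPoly (q : R) (d : ℕ) (f : ℕ → R) :
    Dfull q d f = aeval (seqShift R) (gaussPoly q d) f := by
  induction d generalizing f with
  | zero => rw [Dfull, Dop_eq_aeval, gaussPoly, prod_range_one]
  | succ d ih =>
    rw [Dfull, Function.comp_apply, ih, Dop_eq_aeval, ← Module.End.mul_apply, ← map_mul,
      gaussPoly, gaussPoly, prod_range_succ _ (d + 1)]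

end Gaussian

/-- The set of Gaussian polynomial functions of degree at most `d` is an `F`-linear
subspace of `ℕ → F` of dimension exactly `d + 1`. -/
theorem gaussian_subspace_dim {F : Type*} [Field F] (q : F) (d : ℕ) :
    ∃ W : Submodule F (ℕ → F), (W : Set (ℕ → F)) = {f : ℕ → F | Dfull q d f = 0} ∧
      Module.finrank F W = d + 1 := by
  let E := LinearRecurrence.ofMonic (gaussPoly q d)
  refine ⟨E.solSpace, ?_, ?_⟩
  · ext f
    rw [SetLike.mem_coe, ← E.is_sol_iff_mem_solSpace,
      LinearRecurrence.isSolution_ofMonic_iff (gaussPoly_monic q d), Set.mem_ofPred_eq,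
      Dfull_eq_aeval_gaussPoly]
  · rw [E.finrank_solSpace]
    exact natDegree_gaussPoly q d
end

section
/- Let F be a field, q ∈ F, and d ∈ ℕ. Then the d + 1 functions n ↦ B(n + j, d), for j = 0, 1, …, d, form a basis of the F-vector space {f : ℕ → F | 𝔇_d f = 0} of Gaussian polynomial functions of degree at most d. In particular, every Gaussian polynomial function of degree at most d is a unique F-linear combination of shifted q-binomial coefficients. -/
/-- The `q`-binomial coefficients `B(n, k)`, defined by `B(n, 0) = 1`, `B(0, k+1) = 0`,
and `B(n+1, k+1) = B(n, k) + q^{k+1}·B(n, k+1)`. -/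
def qBinom {R : Type*} [CommRing R] (q : R) : ℕ → ℕ → R
  | _, 0 => 1
  | 0, _ + 1 => 0
  | n + 1, k + 1 => qBinom q n k + q ^ (k + 1) * qBinom q n (k + 1)

/-! Applying `D_{k+1}` to `B(·, k+1)` gives `B(·, k)` (this is the defining recurrence), so
`𝔇_d` kills `B(·, d)`, and, since `𝔇_d` commutes with shifts, every `B(· + j, d)`.
Each equation `D_j f = 0` is a first-order recurrence, so a function killed by `𝔇_d` is
determined by its values at `0, …, d`. Hence `f = ∑ c_j B(· + j, d)` exactly when the Hankel
matrix `(B(i + j, d))_{i,j ≤ d}` maps `c` to `(f 0, …, f d)`. Reversing its columns makes this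
matrix lower unitriangular, because `B(n, d) = 0` for `n < d` and `B(d, d) = 1`; so it is
invertible over any commutative ring. -/

section CommRing

variable {R : Type*} [CommRing R] (q : R)

theorem qBinom_zero_right (n : ℕ) : qBinom q n 0 = 1 := by cases n <;> rfl

theorem qBinom_succ_succ (n k : ℕ) :
    qBinom q (n + 1) (k + 1) = qBinom q n k + q ^ (k + 1) * qBinom q n (k + 1) := rfl

theorem qBinom_eq_zero_of_lt : ∀ {n k : ℕ}, n < k → qBinom q n k = 0
  | 0, _ + 1, _ => rfl
  | n + 1, k + 1, h => by
    rw [qBinom_succ_succ, qBinom_eq_zero_of_lt (by omega), qBinom_eq_zero_of_lt (by omega),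
      mul_zero, add_zero]

theorem qBinom_self : ∀ n, qBinom q n n = 1
  | 0 => rfl
  | n + 1 => by rw [qBinom_succ_succ, qBinom_self n, qBinom_eq_zero_of_lt q n.lt_succ_self,
      mul_zero, add_zero]

def Dopₗ (j : ℕ) : (ℕ → R) →ₗ[R] ℕ → R where
  toFun := Dop q j
  map_add' f g := by ext n; simp only [Dop, Pi.add_apply]; ring
  map_smul' a f := by ext n; simp only [Dop, Pi.smul_apply, smul_eq_mul, RingHom.id_apply]; ring

def Dfullₗ : ℕ → (ℕ → R) →ₗ[R] ℕ → R
  | 0 => Dopₗ q 0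
  | d + 1 => Dfullₗ d ∘ₗ Dopₗ q (d + 1)

theorem Dfullₗ_apply : ∀ (d : ℕ) (f : ℕ → R), Dfullₗ q d f = Dfull q d f
  | 0, _ => rfl
  | d + 1, f => Dfullₗ_apply d (Dop q (d + 1) f)

theorem Dop_comp_add_right (i j : ℕ) (f : ℕ → R) :
    Dop q i (fun n => f (n + j)) = fun n => Dop q i f (n + j) := by
  funext n; simp only [Dop, add_right_comm]

def gaussianPolyFun (d : ℕ) : Submodule R (ℕ → R) :=
  LinearMap.ker (Dfullₗ q d)

theorem mem_gaussianPolyFun {d : ℕ} {f : ℕ → R} :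
    f ∈ gaussianPolyFun q d ↔ Dfull q d f = 0 := by
  rw [gaussianPolyFun, LinearMap.mem_ker, Dfullₗ_apply]

theorem Dfull_comp_add_right (j : ℕ) :
    ∀ (d : ℕ) (f : ℕ → R), Dfull q d (fun n => f (n + j)) = fun n => Dfull q d f (n + j)
  | 0, f => Dop_comp_add_right q 0 j f
  | d + 1, f => by
    change Dfull q d (Dop q (d + 1) _) = _
    rw [Dop_comp_add_right, Dfull_comp_add_right j d]
    rfl

theorem Dop_qBinom_succ (k : ℕ) :
    Dop q (k + 1) (fun n => qBinom q n (k + 1)) = fun n => qBinom q n k := by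
  funext n; rw [Dop, qBinom_succ_succ, add_sub_cancel_right]

theorem Dfull_qBinom : ∀ d : ℕ, Dfull q d (fun n => qBinom q n d) = 0
  | 0 => by funext n; simp [Dfull, Dop, qBinom_zero_right]
  | d + 1 => by
    change Dfull q d (Dop q (d + 1) (fun n => qBinom q n (d + 1))) = 0
    rw [Dop_qBinom_succ, Dfull_qBinom d]

theorem Dfull_shifted_qBinom (d j : ℕ) : Dfull q d (fun n => qBinom q (n + j) d) = 0 := by
  rw [Dfull_comp_add_right q j d (fun n => qBinom q n d), Dfull_qBinom]; rfl

theorem eq_zero_of_Dop_eq_zero {j : ℕ} {f : ℕ → R} (hf : Dop q j f = 0) (h0 : f 0 = 0) :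
    f = 0 := by
  funext n
  induction n with
  | zero => exact h0
  | succ n ih => simpa [Dop, ih] using congrFun hf n

theorem eq_zero_of_Dfull_eq_zero :
    ∀ {d : ℕ} {f : ℕ → R}, Dfull q d f = 0 → (∀ i ≤ d, f i = 0) → f = 0
  | 0, _, hf, h0 => eq_zero_of_Dop_eq_zero q hf (h0 0 le_rfl)
  | d + 1, f, hf, h0 => by
    refine eq_zero_of_Dop_eq_zero q (eq_zero_of_Dfull_eq_zero hf fun i hi => ?_) (h0 0 (by omega))
    rw [Dop, h0 i (by omega), h0 (i + 1) (by omega), mul_zero, sub_zero]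

def qBinomHankel (d : ℕ) : Matrix (Fin (d + 1)) (Fin (d + 1)) R :=
  Matrix.of fun i j => qBinom q (i + j) d

theorem isUnit_qBinomHankel (d : ℕ) : IsUnit (qBinomHankel q d) := by
  have hrev : ((qBinomHankel q d).submatrix id Fin.revPerm).det = 1 := by
    rw [Matrix.det_of_isLowerTriangular]
    · refine Finset.prod_eq_one fun i _ => ?_
      simp only [qBinomHankel, Matrix.submatrix_apply, Matrix.of_apply, id, Fin.revPerm_apply,
        Fin.val_rev]
      rw [show (i : ℕ) + (d + 1 - (i + 1)) = d by omega, qBinom_self]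
    · intro i j hij
      have hij : (i : ℕ) < j := hij
      simp only [qBinomHankel, Matrix.submatrix_apply, Matrix.of_apply, id, Fin.revPerm_apply,
        Fin.val_rev]
      exact qBinom_eq_zero_of_lt q (by omega)
  rw [Matrix.det_permute'] at hrev
  exact (Matrix.isUnit_iff_isUnit_det _).mpr (IsUnit.of_mul_eq_one_right _ hrev)

theorem bijective_mulVec_qBinomHankel (d : ℕ) : Function.Bijective (qBinomHankel q d).mulVec :=
  ⟨Matrix.mulVec_injective_of_isUnit (isUnit_qBinomHankel q d),
    Matrix.mulVec_surjective_iff_isUnit.mpr (isUnit_qBinomHankel q d)⟩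

theorem sum_smul_shifted_qBinom_apply (d : ℕ) (c : Fin (d + 1) → R) (i : Fin (d + 1)) :
    (∑ j, c j • fun n => qBinom q (n + (j : ℕ)) d) i = ((qBinomHankel q d).mulVec c) i := by
  simp only [Finset.sum_apply, Pi.smul_apply, smul_eq_mul, Matrix.mulVec, dotProduct,
    qBinomHankel, Matrix.of_apply, mul_comm]

theorem eq_sum_smul_shifted_qBinom_iff {d : ℕ} {f : ℕ → R} (hf : Dfull q d f = 0)
    (c : Fin (d + 1) → R) :
    f = ∑ j, c j • (fun n => qBinom q (n + (j : ℕ)) d) ↔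
      (qBinomHankel q d).mulVec c = fun i : Fin (d + 1) => f i := by
  refine ⟨fun h => funext fun i => by rw [h, sum_smul_shifted_qBinom_apply], fun h => ?_⟩
  have hsum : (∑ j, c j • fun n => qBinom q (n + (j : ℕ)) d) ∈ gaussianPolyFun q d :=
    Submodule.sum_mem _ fun j _ =>
      Submodule.smul_mem _ _ ((mem_gaussianPolyFun q).mpr (Dfull_shifted_qBinom q d j))
  have hdiff := Submodule.sub_mem _ ((mem_gaussianPolyFun q).mpr hf) hsum
  refine sub_eq_zero.mp <|
    eq_zero_of_Dfull_eq_zero q ((mem_gaussianPolyFun q).mp hdiff) fun i hi => ?_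
  rw [Pi.sub_apply, sub_eq_zero, ← Fin.val_mk (Nat.lt_succ_of_le hi),
    sum_smul_shifted_qBinom_apply, h]

end CommRing

/-- The `d + 1` shifted `q`-binomial functions `n ↦ B(n + j, d)`, `j = 0, …, d`, form a
basis of the space of Gaussian polynomial functions of degree at most `d`: each lies in
the space, they are linearly independent, and every member of the space is a unique
`F`-linear combination of them. -/
theorem shifted_qBinom_basis {F : Type*} [Field F] (q : F) (d : ℕ) :
    (∀ j : Fin (d + 1), Dfull q d (fun n => qBinom q (n + (j : ℕ)) d) = 0) ∧
    LinearIndependent F (fun (j : Fin (d + 1)) => (fun n => qBinom q (n + (j : ℕ)) d : ℕ → F)) ∧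
    ∀ f : ℕ → F, Dfull q d f = 0 →
      ∃! c : Fin (d + 1) → F, f = ∑ j : Fin (d + 1), c j • (fun n => qBinom q (n + (j : ℕ)) d) := by
  have hbasis : ∀ f : ℕ → F, Dfull q d f = 0 →
      ∃! c : Fin (d + 1) → F, f = ∑ j : Fin (d + 1), c j • (fun n => qBinom q (n + (j : ℕ)) d) :=
    fun f hf => by
      simp_rw [eq_sum_smul_shifted_qBinom_iff q hf]
      exact (bijective_mulVec_qBinomHankel q d).existsUnique _
  refine ⟨fun j => Dfull_shifted_qBinom q d j, ?_, hbasis⟩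
  refine Fintype.linearIndependent_iff.mpr fun c hc => ?_
  have hc0 : c = 0 :=
    (hbasis 0 (mem_gaussianPolyFun q |>.mp (zero_mem _))).unique hc.symm (by simp)
  exact congrFun hc0
end
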